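/- Let α : H → H be a semilinear bijection with α(1) = 1 and let L ∈ 𝒜. Then, for all x ∈ H and z ∈ L: (i) if α maps the class Sℓ(L) onto Sℓ(α(L)), then α(x·z) = α(x)·α(z); (ii) if α maps Sℓ(L) onto Sr(α(L)), then α(x·z) = α(z)·α(x); (iii) if α maps Sr(L) onto Sℓ(α(L)), then α(z·x) = α(x)·α(z); (iv) if α maps Sr(L) onto Sr(α(L)), then α(z·x) = α(z)·α(x). Here α maps a set 𝒮 of lines onto a set 𝒮' of lines means {α(N) | N ∈ 𝒮} = 𝒮'. -/

import Mathlib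

variable (F H : Type*) [Field F] [DivisionRing H] [Algebra F H]

/-- A *line* of the projective space `ℙ(H_F)`: a 2-dimensional `F`-subspace of `H`. -/
abbrev Line := {M : Submodule F H // Module.finrank F M = 2}

/-- `M ∥ℓ N` : there is `g ≠ 0` with `N = g·M`. -/
def LeftPar (M N : Submodule F H) : Prop :=
  ∃ g : H, g ≠ 0 ∧ (N : Set H) = (fun m => g * m) '' (M : Set H)

/-- `M ∥r N` : there is `g ≠ 0` with `N = M·g`. -/
def RightPar (M N : Submodule F H) : Prop :=
  ∃ g : H, g ≠ 0 ∧ (N : Set H) = (fun m => m * g) '' (M : Set H)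

/-- The left parallel class `Sℓ(M) = {N | N ∥ℓ M}`. -/
def leftClass (M : Line F H) : Set (Line F H) := {N | LeftPar F H N.1 M.1}

/-- The right parallel class `Sr(M) = {N | N ∥r M}`. -/
def rightClass (M : Line F H) : Set (Line F H) := {N | RightPar F H N.1 M.1}

/-- The `∥`-class `S(M) = {N | N ∥ M}`. -/
def parClass (par : Line F H → Line F H → Prop) (M : Line F H) : Set (Line F H) :=
  {N | par N M}

/-- A parallelism: an equivalence relation on lines such that for every `x ≠ 0`
and every line `M` there is exactly one line `N` with `x ∈ N` and `N ∥ M`. -/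
def IsParallelism (par : Line F H → Line F H → Prop) : Prop :=
  Equivalence par ∧
    ∀ x : H, x ≠ 0 → ∀ M : Line F H, ∃! N : Line F H, x ∈ N.1 ∧ par N M

/-- A Clifford-like parallelism: every `∥`-class is a left or a right parallel class. -/
def IsCliffordLike (par : Line F H → Line F H → Prop) : Prop :=
  IsParallelism F H par ∧
    ∀ M : Line F H,
      parClass F H par M = leftClass F H M ∨ parClass F H par M = rightClass F H M

/-- The star `𝒜` of lines through `F·1`, i.e. the lines containing `1`. -/
def starLines : Set (Line F H) := {L | (1 : H) ∈ L.1}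

/-- The set `ℱ` of lines of `𝒜` whose `∥`-class is a left parallel class. -/
def calF (par : Line F H → Line F H → Prop) : Set (Line F H) :=
  {L | (1 : H) ∈ L.1 ∧ parClass F H par L = leftClass F H L}

/-- A semilinear bijection of `H` (over some field automorphism of `F`). -/
def IsSemilinear (β : H → H) : Prop :=
  Function.Bijective β ∧ (∀ x y : H, β (x + y) = β x + β y) ∧
    ∃ σ : F ≃+* F, ∀ (a : F) (x : H), β (a • x) = σ a • β x

/-- `β` preserves the parallelism `par`: for all lines `M, N`,
`M ∥ N ↔ β(M) ∥ β(N)`, where `β(M)` denotes the line whose carrier is `β '' M`. -/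
def Preserves (β : H → H) (par : Line F H → Line F H → Prop) : Prop :=
  ∀ M N M' N' : Line F H,
    (M'.1 : Set H) = β '' (M.1 : Set H) →
    (N'.1 : Set H) = β '' (N.1 : Set H) →
    (par M N ↔ par M' N')

/-- The image `β(𝒢)` of a set of lines under `β`. -/
def imageLines (β : H → H) (G : Set (Line F H)) : Set (Line F H) :=
  {L' | ∃ L ∈ G, (L'.1 : Set H) = β '' (L.1 : Set H)}

/-- The centre of `H` is exactly `F·1`. -/
def CenterEqF : Prop :=
  ∀ z : H, (∀ x : H, z * x = x * z) ↔ ∃ a : F, z = algebraMap F H a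

/-- Ring automorphism of `H`, as a plain function. -/
def IsRingAutFn (α : H → H) : Prop :=
  Function.Bijective α ∧ (∀ x y : H, α (x + y) = α x + α y) ∧ α 1 = 1 ∧
    ∀ x y : H, α (x * y) = α x * α y

/-- Ring antiautomorphism of `H`, as a plain function. -/
def IsRingAntiAutFn (α : H → H) : Prop :=
  Function.Bijective α ∧ (∀ x y : H, α (x + y) = α x + α y) ∧ α 1 = 1 ∧
    ∀ x y : H, α (x * y) = α y * α x

/-!
A line `L ∋ 1` of a quaternion skew field is a subfield: for `u ∈ L \ F` the centralizer
of `u` is a proper sub-division-algebra, so it has dimension at most `2` and equals `L`.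
If `α` maps `Sℓ(L)` onto `Sℓ(α L)`, the image of the line `y L` is the left translate of
`α L` through `α y`, so `α (y z) = α y * c_y` with `c_y ∈ α L` for `z ∈ L`. Additivity of `α`
at `x`, `y` and `x + y` forces `c_x = c_y` whenever `x ∉ y L`, hence `c_y = c_1 = α z` for
every `y`. The other three cases are the same argument in the opposite rings.
-/

open Function Module MulOpposite Set

section Cosets

variable {K : Type*} [DivisionRing K]

theorem Subfield.image_mul_left_self (B : Subfield K) {m : K} (hm : m ∈ B) (hm0 : m ≠ 0) :
    (m * ·) '' (B : Set K) = B :=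
  Subset.antisymm (image_subset_iff.2 fun _ hb => B.mul_mem hm hb) fun b hb =>
    ⟨m⁻¹ * b, B.mul_mem (B.inv_mem hm) hb, mul_inv_cancel_left₀ hm0 b⟩

theorem Subfield.image_mul_right_self (B : Subfield K) {m : K} (hm : m ∈ B) (hm0 : m ≠ 0) :
    (· * m) '' (B : Set K) = B :=
  Subset.antisymm (image_subset_iff.2 fun _ hb => B.mul_mem hb hm) fun b hb =>
    ⟨b * m⁻¹, B.mul_mem hb (B.inv_mem hm), inv_mul_cancel_right₀ hm0 b⟩

theorem Subfield.image_mul_left_eq_of_mem (B : Subfield K) {g a : K}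
    (ha : a ∈ (g * ·) '' (B : Set K)) (ha0 : a ≠ 0) :
    (g * ·) '' (B : Set K) = (a * ·) '' (B : Set K) := by
  obtain ⟨m, hm, rfl⟩ := ha
  calc (g * ·) '' (B : Set K) = (g * ·) '' ((m * ·) '' (B : Set K)) := by
        rw [B.image_mul_left_self hm (right_ne_zero_of_mul ha0)]
    _ = (g * m * ·) '' (B : Set K) := by simp only [image_image, mul_assoc]

theorem Subfield.image_mul_right_eq_of_mem (B : Subfield K) {g a : K}
    (ha : a ∈ (· * g) '' (B : Set K)) (ha0 : a ≠ 0) :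
    (· * g) '' (B : Set K) = (· * a) '' (B : Set K) := by
  obtain ⟨m, hm, rfl⟩ := ha
  calc (· * g) '' (B : Set K) = (· * g) '' ((· * m) '' (B : Set K)) := by
        rw [B.image_mul_right_self hm (left_ne_zero_of_mul ha0)]
    _ = (· * (m * g)) '' (B : Set K) := by simp only [image_image, mul_assoc]

def Subfield.op (B : Subfield K) : Subfield Kᵐᵒᵖ :=
  { B.toSubring.op with inv_mem' := fun _ hx => B.inv_mem hx }

end Cosets

theorem mem_image_mul_left_unop_preimage_iff {K : Type*} [Mul K] {S : Set K} {x y : Kᵐᵒᵖ} :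
    x ∈ (y * ·) '' (unop ⁻¹' S) ↔ unop x ∈ (· * unop y) '' S := by
  constructor
  · rintro ⟨b, hb, rfl⟩
    exact ⟨unop b, hb, rfl⟩
  · rintro ⟨b, hb, e⟩
    exact ⟨op b, hb, by rw [← op_unop x, ← e]; rfl⟩

section MapMul

variable {R K : Type*} [DivisionRing R] [DivisionRing K] {α : R →+ K} {A : Subring R}
  {B : Subfield K}

/- Compare the coefficients of `x`, `y` and `x + y`: if they differed, `α x` would lie in
`α y B`, i.e. `x ∈ y A`. -/
theorem eq_of_map_mul_eq_mul_of_notMem (hinj : Injective α)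
    (hcoset : ∀ y ≠ 0, ∀ x, α x ∈ (α y * ·) '' (B : Set K) ↔ x ∈ (y * ·) '' (A : Set R))
    {x y z : R} (hz : z ∈ A) (hy : y ≠ 0) (hxy : x ∉ (y * ·) '' (A : Set R))
    {cx cy : K} (hcx : cx ∈ B) (hcy : cy ∈ B)
    (ex : α (x * z) = α x * cx) (ey : α (y * z) = α y * cy) : cx = cy := by
  have hxy0 : x + y ≠ 0 := fun h => hxy ⟨-1, A.neg_mem A.one_mem,
    show y * -1 = x by rw [mul_neg_one, eq_neg_of_add_eq_zero_left h]⟩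
  obtain ⟨cs, hcs, es : α (x + y) * cs = _⟩ :=
    (hcoset _ hxy0 ((x + y) * z)).2 ⟨z, hz, rfl⟩
  have key : α x * (cs - cx) = α y * (cy - cs) := by
    have : α x * cs + α y * cs = α x * cx + α y * cy := by
      rw [← add_mul, ← map_add, es, add_mul, map_add, ex, ey]
    rw [mul_sub, mul_sub, sub_eq_sub_iff_add_eq_add, this, add_comm]
  obtain rfl : cs = cx := by
    by_contra hne
    refine hxy ((hcoset y hy x).1 ⟨(cy - cs) * (cs - cx)⁻¹,
      B.mul_mem (B.sub_mem hcy hcs) (B.inv_mem (B.sub_mem hcs hcx)), ?_⟩)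
    show α y * _ = α x
    rw [← mul_assoc, ← key, mul_inv_cancel_right₀ (sub_ne_zero.2 hne)]
  rw [sub_self, mul_zero, eq_comm, mul_eq_zero, sub_eq_zero] at key
  exact (key.resolve_left ((map_ne_zero_iff α hinj).2 hy)).symm

theorem map_mul_of_cosets_left_left (hinj : Injective α) (h1 : α 1 = 1) (hA : A ≠ ⊤)
    (hcoset : ∀ y ≠ 0, ∀ x, α x ∈ (α y * ·) '' (B : Set K) ↔ x ∈ (y * ·) '' (A : Set R))
    (x : R) {z : R} (hz : z ∈ A) : α (x * z) = α x * α z := by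
  have coeff : ∀ y ≠ 0, ∃ c ∈ B, α (y * z) = α y * c := fun y hy => by
    obtain ⟨c, hc, e⟩ := (hcoset y hy (y * z)).2 ⟨z, hz, rfl⟩
    exact ⟨c, hc, e.symm⟩
  have one : α (1 * z) = α 1 * α z := by rw [h1, one_mul, one_mul]
  have hαz : α z ∈ B := by
    obtain ⟨c, hc, e⟩ := coeff 1 one_ne_zero
    rw [one_mul, h1, one_mul] at e
    exact e ▸ hc
  have outside : ∀ y ∉ A, ∀ c ∈ B, α (y * z) = α y * c → c = α z := fun y hy c hc e =>
    eq_of_map_mul_eq_mul_of_notMem hinj hcoset hz one_ne_zero (by simpa using hy) hc hαz e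
      one
  rcases eq_or_ne x 0 with rfl | hx
  · simp
  obtain ⟨c, hc, e⟩ := coeff x hx
  rw [e]
  congr 1
  by_cases hxA : x ∈ A
  · obtain ⟨w, hw⟩ := SetLike.exists_not_mem_of_ne_top A hA
    obtain ⟨cw, hcw, ew⟩ := coeff w fun h => hw (h ▸ A.zero_mem)
    have hwx : w ∉ (x * ·) '' (A : Set R) := by
      rintro ⟨a, ha, rfl⟩
      exact hw (A.mul_mem hxA ha)
    rw [← eq_of_map_mul_eq_mul_of_notMem hinj hcoset hz hx hwx hcw hc ew e]
    exact outside w hw cw hcw ew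
  · exact outside x hxA c hc e

theorem map_mul_of_cosets_left_right (hinj : Injective α) (h1 : α 1 = 1) (hA : A ≠ ⊤)
    (hcoset : ∀ y ≠ 0, ∀ x, α x ∈ (· * α y) '' (B : Set K) ↔ x ∈ (y * ·) '' (A : Set R))
    (x : R) {z : R} (hz : z ∈ A) : α (x * z) = α z * α x :=
  op_injective <| map_mul_of_cosets_left_left
    (α := (opAddEquiv : K ≃+ Kᵐᵒᵖ).toAddMonoidHom.comp α) (B := B.op)
    (op_injective.comp hinj) (by simp [h1]) hA
    (fun y hy x => mem_image_mul_left_unop_preimage_iff.trans (hcoset y hy x)) x hz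

theorem map_mul_of_cosets_right_left (hinj : Injective α) (h1 : α 1 = 1) (hA : A ≠ ⊤)
    (hcoset : ∀ y ≠ 0, ∀ x, α x ∈ (α y * ·) '' (B : Set K) ↔ x ∈ (· * y) '' (A : Set R))
    (x : R) {z : R} (hz : z ∈ A) : α (z * x) = α x * α z :=
  map_mul_of_cosets_left_left
    (α := α.comp (opAddEquiv : R ≃+ Rᵐᵒᵖ).symm.toAddMonoidHom) (A := A.op)
    (hinj.comp unop_injective) h1 (mt Subring.op_eq_top.1 hA)
    (fun y hy x => (hcoset y.unop ((unop_ne_zero_iff y).2 hy) x.unop).trans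
      mem_image_mul_left_unop_preimage_iff.symm) (op x) hz

theorem map_mul_of_cosets_right_right (hinj : Injective α) (h1 : α 1 = 1) (hA : A ≠ ⊤)
    (hcoset : ∀ y ≠ 0, ∀ x, α x ∈ (· * α y) '' (B : Set K) ↔ x ∈ (· * y) '' (A : Set R))
    (x : R) {z : R} (hz : z ∈ A) : α (z * x) = α z * α x :=
  map_mul_of_cosets_left_right
    (α := α.comp (opAddEquiv : R ≃+ Rᵐᵒᵖ).symm.toAddMonoidHom) (A := A.op)
    (hinj.comp unop_injective) h1 (mt Subring.op_eq_top.1 hA)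
    (fun y hy x => (hcoset y.unop ((unop_ne_zero_iff y).2 hy) x.unop).trans
      mem_image_mul_left_unop_preimage_iff.symm) (op x) hz

end MapMul

section Lines

variable {F H : Type*} [Field F] [DivisionRing H] [Algebra F H]

theorem finrank_map_of_injective {M : Type*} [AddCommGroup M] [Module F M] {σ : F →+* F}
    [RingHomSurjective σ] (hσ : Injective σ) {f : M →ₛₗ[σ] M} (hf : Injective f)
    (N : Submodule F M) : finrank F (N.map f) = finrank F N := by
  let e := AddEquiv.ofBijective (f.submoduleMap N)
    ⟨LinearMap.submoduleMap_injective hf N, f.submoduleMap_surjective N⟩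
  exact congrArg Cardinal.toNat
    (rank_eq_of_equiv_equiv σ e ⟨hσ, RingHomSurjective.is_surjective⟩
      (f.submoduleMap N).map_smulₛₗ).symm

theorem exists_line_image_of_injective {σ : F →+* F} [RingHomSurjective σ] (hσ : Injective σ)
    {f : H →ₛₗ[σ] H} (hf : Injective f) (M : Line F H) :
    ∃ M' : Line F H, (M'.1 : Set H) = f '' M.1 :=
  ⟨⟨M.1.map f, (finrank_map_of_injective hσ hf M.1).trans M.2⟩, Submodule.map_coe f M.1⟩

theorem IsSemilinear.exists_line_image {α : H → H} (hα : IsSemilinear F H α) (M : Line F H) :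
    ∃ M' : Line F H, (M'.1 : Set H) = α '' M.1 := by
  obtain ⟨hbij, hadd, σ, hσ⟩ := hα
  let f : H →ₛₗ[(σ : F →+* F)] H := { toFun := α, map_add' := hadd, map_smul' := hσ }
  exact exists_line_image_of_injective σ.injective (f := f) hbij.1 M

theorem exists_mem_leftClass_image_mul_left (L : Line F H) :
    ∀ y ≠ (0 : H), ∃ N ∈ leftClass F H L, (N.1 : Set H) = (y * ·) '' L.1 := by
  intro y hy
  obtain ⟨N, hN⟩ := exists_line_image_of_injective injective_id
    (f := LinearMap.mulLeft F y) (mul_right_injective₀ hy) L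
  refine ⟨N, ⟨y⁻¹, inv_ne_zero hy, ?_⟩, hN⟩
  simp [hN, image_image, inv_mul_cancel_left₀ hy]

theorem exists_mem_rightClass_image_mul_right (L : Line F H) :
    ∀ y ≠ (0 : H), ∃ N ∈ rightClass F H L, (N.1 : Set H) = (· * y) '' L.1 := by
  intro y hy
  obtain ⟨N, hN⟩ := exists_line_image_of_injective injective_id
    (f := LinearMap.mulRight F y) (mul_left_injective₀ hy) L
  refine ⟨N, ⟨y⁻¹, inv_ne_zero hy, ?_⟩, hN⟩
  simp [hN, image_image, mul_inv_cancel_right₀ hy]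

theorem eq_image_mul_left_of_mem_leftClass {L' : Line F H} (B : Subfield H)
    (hB : (B : Set H) = L'.1) : ∀ N ∈ leftClass F H L', ∀ a ∈ N.1, a ≠ 0 →
      (N.1 : Set H) = (a * ·) '' L'.1 := by
  rintro N ⟨g, hg, hgN⟩ a ha ha0
  have hN : (N.1 : Set H) = (g⁻¹ * ·) '' B := by
    simp [hB, hgN, image_image, inv_mul_cancel_left₀ hg]
  rw [hN, B.image_mul_left_eq_of_mem (hN ▸ ha) ha0, hB]

theorem eq_image_mul_right_of_mem_rightClass {L' : Line F H} (B : Subfield H)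
    (hB : (B : Set H) = L'.1) : ∀ N ∈ rightClass F H L', ∀ a ∈ N.1, a ≠ 0 →
      (N.1 : Set H) = (· * a) '' L'.1 := by
  rintro N ⟨g, hg, hgN⟩ a ha ha0
  have hN : (N.1 : Set H) = (· * g⁻¹) '' B := by
    simp [hB, hgN, image_image, mul_inv_cancel_right₀ hg]
  rw [hN, B.image_mul_right_eq_of_mem (hN ▸ ha) ha0, hB]

theorem mem_iff_of_imageLines_eq {α : H → H} (hα : IsSemilinear F H α)
    {C : Set (Line F H)} {S : H → Set H} (hC : ∀ y ≠ 0, ∃ N ∈ C, (N.1 : Set H) = S y)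
    (hS : ∀ y, y ∈ S y) {D : Set (Line F H)} (h : imageLines F H α C = D) {T : H → Set H}
    (hD : ∀ N ∈ D, ∀ a ∈ N.1, a ≠ 0 → (N.1 : Set H) = T a) :
    ∀ y ≠ 0, ∀ x, α x ∈ T (α y) ↔ x ∈ S y := by
  intro y hy x
  have hα0 : α 0 = 0 := (AddMonoidHom.mk' α hα.2.1).map_zero
  obtain ⟨N, hN, hNS⟩ := hC y hy
  obtain ⟨N', hN'⟩ := hα.exists_line_image N
  have hαy : α y ∈ N'.1 := by
    rw [← SetLike.mem_coe, hN', hNS]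
    exact mem_image_of_mem α (hS y)
  rw [← hD N' (h ▸ ⟨N, hN, hN'⟩) _ hαy fun h0 => hy (hα.1.1 (h0.trans hα0.symm)), hN',
    hα.1.1.mem_set_image, hNS]

/- If `w ∉ S`, then `S ∩ w S = 0`, since `w = v s⁻¹` otherwise. -/
theorem Subalgebra.two_mul_finrank_le_of_ne_top [FiniteDimensional F H] (S : Subalgebra F H)
    (hinv : ∀ x ∈ S, x⁻¹ ∈ S) (hS : S ≠ ⊤) : 2 * finrank F S ≤ finrank F H := by
  obtain ⟨w, hw⟩ := SetLike.exists_not_mem_of_ne_top S hS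
  have hw0 : w ≠ 0 := fun h => hw (h ▸ S.zero_mem)
  set V := Subalgebra.toSubmodule S
  set W := V.map (LinearMap.mulLeft F w)
  have hVW : V ⊓ W = ⊥ := by
    refine (Submodule.eq_bot_iff _).2 ?_
    rintro _ ⟨hv, s, hs, rfl⟩
    by_contra hne
    have hs0 : s ≠ 0 := right_ne_zero_of_mul hne
    exact hw (by simpa [hs0] using S.mul_mem hv (hinv s hs))
  have hW : finrank F W = finrank F V :=
    finrank_map_of_injective injective_id (mul_right_injective₀ hw0) V
  have hsum := Submodule.finrank_sup_add_finrank_inf_eq V W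
  have hle := Submodule.finrank_le (V ⊔ W)
  rw [hVW, _root_.finrank_bot F H, hW, Subalgebra.finrank_toSubmodule] at hsum
  omega

theorem Line.exists_eq_centralizer (hcenter : CenterEqF F H) (hdim : finrank F H = 4)
    (M : Line F H) (hM : (1 : H) ∈ M.1) : ∃ u : H, (M.1 : Set H) = Set.centralizer {u} := by
  have : FiniteDimensional F H := Module.finite_of_finrank_pos (by omega)
  have hone : finrank F (F ∙ (1 : H)) = 1 := finrank_span_singleton one_ne_zero
  have hlt : F ∙ (1 : H) < M.1 := ((Submodule.span_singleton_le_iff_mem _ _).2 hM).lt_of_ne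
    fun h => by have := M.2; rw [← h, hone] at this; omega
  obtain ⟨u, huM, hu⟩ := SetLike.exists_of_lt hlt
  set C := Subalgebra.centralizer F {u}
  have hC : C ≠ ⊤ := fun h => hu <| by
    obtain ⟨a, rfl⟩ := (hcenter u).1 fun x =>
      (Subalgebra.mem_centralizer_iff F).1 (h ▸ Algebra.mem_top : x ∈ C) u rfl
    exact Submodule.mem_span_singleton.2 ⟨a, (Algebra.algebraMap_eq_smul_one a).symm⟩
  have hCle := C.two_mul_finrank_le_of_ne_top (fun _ => Set.inv_mem_centralizer₀) hC
  set P := F ∙ (1 : H) ⊔ F ∙ u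
  have hP : 1 < finrank F P := hone ▸ Submodule.finrank_lt_finrank_of_lt
    (lt_of_le_of_ne le_sup_left fun h => hu (h ▸ Submodule.mem_sup_right
      (Submodule.mem_span_singleton_self u)))
  have hPM : P ≤ M.1 := sup_le ((Submodule.span_singleton_le_iff_mem _ _).2 hM)
    ((Submodule.span_singleton_le_iff_mem _ _).2 huM)
  have hPC : P ≤ Subalgebra.toSubmodule C := sup_le
    ((Submodule.span_singleton_le_iff_mem _ _).2 C.one_mem)
    ((Submodule.span_singleton_le_iff_mem _ _).2 (Set.mem_centralizer_iff.2 fun _ h => h ▸ rfl))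
  have hPC' := Submodule.eq_of_le_of_finrank_le hPC
    (by rw [Subalgebra.finrank_toSubmodule]; omega)
  refine ⟨u, ?_⟩
  rw [← Submodule.eq_of_le_of_finrank_le hPM (by rw [M.2]; omega), hPC']
  exact Subalgebra.coe_centralizer F {u}

def Line.toSubfield (hcenter : CenterEqF F H) (hdim : finrank F H = 4) (M : Line F H)
    (hM : (1 : H) ∈ M.1) : Subfield H where
  carrier := M.1
  mul_mem' {a b} ha hb := by
    obtain ⟨u, hu⟩ := M.exists_eq_centralizer hcenter hdim hM
    rw [hu] at ha hb ⊢
    exact Set.mul_mem_centralizer ha hb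
  one_mem' := hM
  add_mem' := M.1.add_mem
  zero_mem' := M.1.zero_mem
  neg_mem' := M.1.neg_mem
  inv_mem' x hx := by
    obtain ⟨u, hu⟩ := M.exists_eq_centralizer hcenter hdim hM
    rw [hu] at hx ⊢
    exact Set.inv_mem_centralizer₀ hx

theorem Line.toSubfield_toSubring_ne_top (hcenter : CenterEqF F H) (hdim : finrank F H = 4)
    (M : Line F H) (hM : (1 : H) ∈ M.1) : (M.toSubfield hcenter hdim hM).toSubring ≠ ⊤ := by
  intro h
  have := M.2
  rw [show M.1 = ⊤ from eq_top_iff.2 fun x _ => (h ▸ Subring.mem_top x :), finrank_top] at this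
  omega

end Lines

/-- Lemma on semilinear bijections fixing `1`: if `α` maps one of the parallel classes
`Sℓ(L)`, `Sr(L)` of a line `L ∈ 𝒜` onto one of the parallel classes of the image line
`α(L)`, then `α` is multiplicative resp. antimultiplicative with respect to `L`. -/
theorem semilinear_class_mul
    (hcenter : CenterEqF F H) (hdim : Module.finrank F H = 4)
    (α : H → H) (hα : IsSemilinear F H α) (h1 : α 1 = 1)
    (L : Line F H) (hL : (1 : H) ∈ L.1)
    (L' : Line F H) (hL' : (L'.1 : Set H) = α '' (L.1 : Set H)) :
    (imageLines F H α (leftClass F H L) = leftClass F H L' →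
      ∀ x : H, ∀ z ∈ L.1, α (x * z) = α x * α z) ∧
    (imageLines F H α (leftClass F H L) = rightClass F H L' →
      ∀ x : H, ∀ z ∈ L.1, α (x * z) = α z * α x) ∧
    (imageLines F H α (rightClass F H L) = leftClass F H L' →
      ∀ x : H, ∀ z ∈ L.1, α (z * x) = α x * α z) ∧
    (imageLines F H α (rightClass F H L) = rightClass F H L' →
      ∀ x : H, ∀ z ∈ L.1, α (z * x) = α z * α x) := by
  have hL'1 : (1 : H) ∈ L'.1 := by
    rw [← SetLike.mem_coe, hL']
    exact ⟨1, hL, h1⟩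
  let f : H →+ H := AddMonoidHom.mk' α hα.2.1
  let B := L'.toSubfield hcenter hdim hL'1
  have hA := L.toSubfield_toSubring_ne_top hcenter hdim hL
  have hSl (y : H) : y ∈ (y * ·) '' (L.1 : Set H) := ⟨1, hL, mul_one y⟩
  have hSr (y : H) : y ∈ (· * y) '' (L.1 : Set H) := ⟨1, hL, one_mul y⟩
  have hCl := exists_mem_leftClass_image_mul_left L
  have hCr := exists_mem_rightClass_image_mul_right L
  have hDl := eq_image_mul_left_of_mem_leftClass B rfl
  have hDr := eq_image_mul_right_of_mem_rightClass B rfl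
  refine ⟨fun h x z hz => ?_, fun h x z hz => ?_, fun h x z hz => ?_, fun h x z hz => ?_⟩
  · exact map_mul_of_cosets_left_left (α := f) (B := B) hα.1.1 h1 hA
      (mem_iff_of_imageLines_eq hα hCl hSl h hDl) x hz
  · exact map_mul_of_cosets_left_right (α := f) (B := B) hα.1.1 h1 hA
      (mem_iff_of_imageLines_eq hα hCl hSl h hDr) x hz
  · exact map_mul_of_cosets_right_left (α := f) (B := B) hα.1.1 h1 hA
      (mem_iff_of_imageLines_eq hα hCr hSr h hDl) x hz
  · exact map_mul_of_cosets_right_right (α := f) (B := B) hα.1.1 h1 hA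
      (mem_iff_of_imageLines_eq hα hCr hSr h hDr) x hz
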